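/- If r ≤ 5^t, then every factor of Φ of length r is a factor of φ^t(x) for some factor x of Φ of length 2. -/

import Mathlib

/-- the 5-uniform morphism φ: 0 ↦ 00101, 1 ↦ 11011 (on letters). -/
def phiMap (x : ℕ) : List ℕ := if x = 0 then [0, 0, 1, 0, 1] else [1, 1, 0, 1, 1]

/-- φ applied to a word. -/
def phiL (l : List ℕ) : List ℕ := l.flatMap phiMap

/-- `Phi m` is the `m`-th letter (0-indexed) of the fixed point Φ = φ^ω(0) of φ
starting with 0: `φ^[m+1]([0])` has length `5^(m+1) > m` and is a prefix of Φ. -/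
def Phi (m : ℕ) : ℕ := (phiL^[m + 1] [0]).getD m 0

/-- the length-`n` factor of `w` starting at position `i`. -/
def factorAt (w : ℕ → ℕ) (i n : ℕ) : List ℕ := (List.range n).map (fun j => w (i + j))

/-- `u` is a factor of the infinite word `w`. -/
def IsFactor (w : ℕ → ℕ) (u : List ℕ) : Prop := ∃ i, u = factorAt w i u.length

/-! Φ is a fixed point of φ, so `φ^t` maps the factor of Φ of length `m` at position `q` onto
the factor of length `5^t * m` at position `5^t * q`. A factor of length `r ≤ 5^t` at position
`i` starts in the block `[5^t q, 5^t (q + 1))` with `q = i / 5^t`, hence ends before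
`5^t (q + 2)`, so it lies inside `φ^t` of the length-2 factor of Φ at position `q`. -/

lemma factorAt_length (w : ℕ → ℕ) (i n : ℕ) : (factorAt w i n).length = n := by
  simp [factorAt]

lemma factorAt_add (w : ℕ → ℕ) (i a b : ℕ) :
    factorAt w i (a + b) = factorAt w i a ++ factorAt w (i + a) b := by
  simp [factorAt, List.range_add, Nat.add_assoc]

lemma factorAt_infix_of_le (w : ℕ → ℕ) {i j r n : ℕ} (hji : j ≤ i) (hin : i + r ≤ j + n) :
    factorAt w i r <:+: factorAt w j n := by
  obtain ⟨a, rfl⟩ := Nat.exists_eq_add_of_le hji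
  obtain ⟨b, rfl⟩ := Nat.exists_eq_add_of_le (show a + r ≤ n by omega)
  rw [add_assoc, factorAt_add, factorAt_add, ← List.append_assoc]
  exact List.infix_append _ _ _

lemma phiMap_length (a : ℕ) : (phiMap a).length = 5 := by
  unfold phiMap; split <;> rfl

lemma phiL_append (l l' : List ℕ) : phiL (l ++ l') = phiL l ++ phiL l' :=
  List.flatMap_append

lemma phiL_cons (a : ℕ) (l : List ℕ) : phiL (a :: l) = phiMap a ++ phiL l :=
  List.flatMap_cons

lemma getD_phiL (l : List ℕ) {q j : ℕ} (hq : q < l.length) (hj : j < 5) :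
    (phiL l).getD (5 * q + j) 0 = (phiMap (l.getD q 0)).getD j 0 := by
  induction l generalizing q with
  | nil => simp at hq
  | cons a l ih =>
    cases q with
    | zero =>
      rw [phiL_cons, Nat.mul_zero, Nat.zero_add,
        List.getD_append _ _ _ _ ((phiMap_length a).symm ▸ hj)]
      rfl
    | succ q =>
      rw [phiL_cons, show 5 * (q + 1) + j = (phiMap a).length + (5 * q + j) by
        rw [phiMap_length]; ring, List.getD_append_right _ _ _ _ (Nat.le_add_right _ _),
        Nat.add_sub_cancel_left, ih (by simpa using hq)]
      rfl

lemma phiL_iterate_prefix_succ (k : ℕ) : phiL^[k] [0] <+: phiL^[k + 1] [0] := by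
  rw [Function.iterate_succ_apply]
  induction k with
  | zero => exact ⟨[0, 1, 0, 1], rfl⟩
  | succ k ih =>
    simp only [Function.iterate_succ_apply'] at ih ⊢
    exact ih.flatMap phiMap

lemma phiL_iterate_prefix {k k' : ℕ} (h : k ≤ k') : phiL^[k] [0] <+: phiL^[k'] [0] := by
  induction k', h using Nat.le_induction with
  | base => exact List.prefix_refl _
  | succ k' _ ih => exact ih.trans (phiL_iterate_prefix_succ k')

lemma length_phiL_iterate (k : ℕ) : (phiL^[k] [0]).length = 5 ^ k := by
  induction k with
  | zero => rfl
  | succ k ih =>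
    rw [Function.iterate_succ_apply', phiL, List.length_flatMap]
    simp [phiMap_length, ih, pow_succ, mul_comm]

lemma getD_phiL_iterate {k m : ℕ} (hm : m < 5 ^ k) : (phiL^[k] [0]).getD m 0 = Phi m := by
  have stable : ∀ {a b}, a ≤ b → m < 5 ^ a →
      (phiL^[b] [0]).getD m 0 = (phiL^[a] [0]).getD m 0 := fun h hm => by
    obtain ⟨c, hc⟩ := phiL_iterate_prefix h
    rw [← hc, List.getD_append _ _ _ _ ((length_phiL_iterate _).symm ▸ hm)]
  have hm' : m < 5 ^ (m + 1) := (Nat.lt_pow_self (by norm_num)).trans_le' (Nat.le_succ m)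
  -- both sides are read off the common extension `φ^[max k (m + 1)] [0]`
  rw [Phi, ← stable (le_max_left k (m + 1)) hm, ← stable (le_max_right k (m + 1)) hm']

lemma Phi_five_mul_add (q : ℕ) {j : ℕ} (hj : j < 5) :
    Phi (5 * q + j) = (phiMap (Phi q)).getD j 0 := by
  have hq : q < 5 ^ (q + 1) := (Nat.lt_pow_self (by norm_num)).trans_le' (Nat.le_succ q)
  have hqj : 5 * q + j < 5 ^ (q + 2) := by rw [pow_succ]; omega
  rw [← getD_phiL_iterate hqj, ← getD_phiL_iterate hq, Function.iterate_succ_apply']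
  exact getD_phiL _ ((length_phiL_iterate _).symm ▸ hq) hj

lemma factorAt_Phi_five_mul (q : ℕ) : factorAt Phi (5 * q) 5 = phiMap (Phi q) := by
  refine List.ext_getElem (by rw [factorAt_length, phiMap_length]) fun j _ hj => ?_
  have hj5 : j < 5 := phiMap_length (Phi q) ▸ hj
  simp [factorAt, Phi_five_mul_add q hj5, List.getElem?_eq_getElem hj]

lemma phiL_factorAt_Phi (q m : ℕ) : phiL (factorAt Phi q m) = factorAt Phi (5 * q) (5 * m) := by
  induction m with
  | zero => rfl
  | succ m ih =>
    rw [factorAt_add, phiL_append, ih, mul_add, factorAt_add, ← mul_add, mul_one,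
      factorAt_Phi_five_mul]
    simp [factorAt, phiL]

lemma phiL_iterate_factorAt_Phi (t q m : ℕ) :
    phiL^[t] (factorAt Phi q m) = factorAt Phi (5 ^ t * q) (5 ^ t * m) := by
  induction t with
  | zero => simp
  | succ t ih =>
    rw [Function.iterate_succ_apply', ih, phiL_factorAt_Phi, pow_succ', mul_assoc, mul_assoc]

/-- If `r ≤ 5^t`, then every length-`r` factor of Φ occurs as a factor (infix) of
`φ^[t] x` for some length-2 factor `x` of Φ. -/
theorem Phi_factor_in_image (t r : ℕ) (hr : r ≤ 5 ^ t) (u : List ℕ)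
    (hu : IsFactor Phi u) (hlen : u.length = r) :
    ∃ x : List ℕ, IsFactor Phi x ∧ x.length = 2 ∧ u <:+: phiL^[t] x := by
  obtain ⟨i, hi⟩ := hu
  refine ⟨factorAt Phi (i / 5 ^ t) 2, ⟨i / 5 ^ t, by rw [factorAt_length]⟩,
    factorAt_length _ _ _, ?_⟩
  rw [phiL_iterate_factorAt_Phi, hi, hlen]
  have hdiv := Nat.div_add_mod i (5 ^ t)
  have hmod := Nat.mod_lt i (pow_pos (by norm_num : 0 < 5) t)
  exact factorAt_infix_of_le Phi (by omega) (by omega)
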